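/- Define, for real λ with λ < 0 or λ > 1 and real m: ω̃₁(m,λ) = −(1−m)·√((λ−1)(2−λ+2ρ(λ)))/|λ|, ω̃₂(m,λ) = (1−m)·(λ−2−2ρ(λ))/(2λ) + m·(2λ−1−ρ(λ))/(2(1+ρ(λ))), ω̃₃(m,λ) = m·sgn(λ)·√(λ(2−λ+2ρ(λ)))/(1+ρ(λ)) (a parametrization of a common generating line of the hyperboloid Q_λ and the extended oloid). Then for every fixed m ∈ ℝ, both as λ → +∞ and as λ → −∞: ω̃₁(m,λ) tends to m−1, ω̃₂(m,λ) tends to m−1/2, and ω̃₃(m,λ) tends to m; moreover, for every m ∈ ℝ one has (m−1)² − m² + 2(m−1/2) = 0, i.e., the limit line {(m−1, m−1/2, m) : m ∈ ℝ} is a generating line of the hyperbolic paraboloid x² − z² + 2y = 0 and is an asymptote of the edge of regression of the extended oloid. -/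
import Mathlib


open Filter

/-- `ρ(λ) = sgn(λ)·√(1−λ+λ²)`. -/
noncomputable def ρ (l : ℝ) : ℝ := Real.sign l * Real.sqrt (1 - l + l ^ 2)

/-- First coordinate of the common generating line of `Q_λ` and the extended oloid. -/
noncomputable def ωt₁ (m l : ℝ) : ℝ :=
  -((1 - m) * Real.sqrt ((l - 1) * (2 - l + 2 * ρ l)) / |l|)

/-- Second coordinate of the common generating line of `Q_λ` and the extended oloid. -/
noncomputable def ωt₂ (m l : ℝ) : ℝ :=
  (1 - m) * (l - 2 - 2 * ρ l) / (2 * l) + m * (2 * l - 1 - ρ l) / (2 * (1 + ρ l))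

/-- Third coordinate of the common generating line of `Q_λ` and the extended oloid. -/
noncomputable def ωt₃ (m l : ℝ) : ℝ :=
  m * Real.sign l * Real.sqrt (l * (2 - l + 2 * ρ l)) / (1 + ρ l)

noncomputable def sAux (u : ℝ) : ℝ := Real.sqrt (u ^ 2 - u + 1)

noncomputable def g₁ (m u : ℝ) : ℝ :=
  -((1 - m) * Real.sqrt ((1 - u) * (2 * u - 1 + 2 * sAux u)))

noncomputable def g₂ (m u : ℝ) : ℝ :=
  (1 - m) * (1 - 2 * u - 2 * sAux u) / 2 + m * (2 - u - sAux u) / (2 * (u + sAux u))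

noncomputable def g₃ (m u : ℝ) : ℝ :=
  m * Real.sqrt (2 * u - 1 + 2 * sAux u) / (u + sAux u)

lemma mul_sqrt_eq (c X : ℝ) (hc : 0 ≤ c) : c * Real.sqrt X = Real.sqrt (c ^ 2 * X) := by
  rw [Real.sqrt_mul (sq_nonneg c), Real.sqrt_sq hc]

lemma rho_eq (l : ℝ) (hl : l ≠ 0) : ρ l = l * sAux l⁻¹ := by
  have hinv : l * l⁻¹ = 1 := mul_inv_cancel₀ hl
  have key : l ^ 2 * ((l⁻¹) ^ 2 - l⁻¹ + 1) = 1 - l + l ^ 2 := by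
    linear_combination (l * l⁻¹ + 1 - l) * hinv
  rcases hl.lt_or_gt with h | h
  · have h5 : l * sAux l⁻¹ = -((-l) * sAux l⁻¹) := by ring
    rw [h5, sAux, mul_sqrt_eq _ _ (by linarith)]
    have h6 : (-l) ^ 2 * ((l⁻¹) ^ 2 - l⁻¹ + 1) = 1 - l + l ^ 2 := by
      linear_combination (l * l⁻¹ + 1 - l) * hinv
    rw [h6, ρ, Real.sign_of_neg h]; ring
  · rw [sAux, mul_sqrt_eq _ _ (le_of_lt h), key, ρ, Real.sign_of_pos h, one_mul]

lemma key1 (m l : ℝ) (hl : l ≠ 0) : ωt₁ m l = g₁ m l⁻¹ := by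
  have habs : 0 ≤ |l| := abs_nonneg l
  have hinv : l * l⁻¹ = 1 := mul_inv_cancel₀ hl
  have hA : (l - 1) * (2 - l + 2 * ρ l) = l ^ 2 * ((1 - l⁻¹) * (2 * l⁻¹ - 1 + 2 * sAux l⁻¹)) := by
    rw [rho_eq l hl]
    linear_combination (2 * (l * l⁻¹) + 2 - 3 * l + 2 * l * sAux l⁻¹) * hinv
  rw [ωt₁, g₁, hA, ← sq_abs, ← mul_sqrt_eq _ _ habs,
    mul_comm |l| _, mul_div_assoc, mul_div_assoc,
    div_self (abs_ne_zero.2 hl), mul_one]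

lemma key2 (m l : ℝ) (hl : l ≠ 0) : ωt₂ m l = g₂ m l⁻¹ := by
  have hinv : l * l⁻¹ = 1 := mul_inv_cancel₀ hl
  have h1 : (1 - m) * (l - 2 - 2 * ρ l) = l * ((1 - m) * (1 - 2 * l⁻¹ - 2 * sAux l⁻¹)) := by
    rw [rho_eq l hl]; linear_combination (2 * (1 - m)) * hinv
  have h2 : 2 * l = l * 2 := by ring
  have h3 : m * (2 * l - 1 - ρ l) = l * (m * (2 - l⁻¹ - sAux l⁻¹)) := by
    rw [rho_eq l hl]; linear_combination m * hinv
  have h4 : 2 * (1 + ρ l) = l * (2 * (l⁻¹ + sAux l⁻¹)) := by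
    rw [rho_eq l hl]; linear_combination (-2 : ℝ) * hinv
  rw [ωt₂, g₂, h1, h3, h4, h2, mul_div_mul_left _ _ hl, mul_div_mul_left _ _ hl]

lemma key3 (m l : ℝ) (hl : l ≠ 0) : ωt₃ m l = g₃ m l⁻¹ := by
  have hinv : l * l⁻¹ = 1 := mul_inv_cancel₀ hl
  have hB : l * (2 - l + 2 * ρ l) = l ^ 2 * (2 * l⁻¹ - 1 + 2 * sAux l⁻¹) := by
    rw [rho_eq l hl]; linear_combination (-2 * l) * hinv
  have h4 : 1 + ρ l = l * (l⁻¹ + sAux l⁻¹) := by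
    rw [rho_eq l hl]; linear_combination (-1 : ℝ) * hinv
  have hsign : Real.sign l * |l| = l := by
    rcases hl.lt_or_gt with h | h
    · rw [Real.sign_of_neg h, abs_of_neg h]; ring
    · rw [Real.sign_of_pos h, abs_of_pos h]; ring
  rw [ωt₃, g₃, hB, ← sq_abs, ← mul_sqrt_eq _ _ (abs_nonneg l), h4]
  rw [show m * Real.sign l * (|l| * Real.sqrt (2 * l⁻¹ - 1 + 2 * sAux l⁻¹))
      = (Real.sign l * |l|) * (m * Real.sqrt (2 * l⁻¹ - 1 + 2 * sAux l⁻¹)) by ring, hsign,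
    mul_div_mul_left _ _ hl]

lemma sAux_cont : Continuous sAux := by
  unfold sAux; fun_prop

lemma sAux_zero : sAux 0 = 1 := by simp [sAux]

lemma g₁_tendsto (m : ℝ) : Tendsto (g₁ m) (nhds 0) (nhds (m - 1)) := by
  have hc : ContinuousAt (g₁ m) 0 := by
    unfold g₁ sAux
    fun_prop
  have h0 : g₁ m 0 = m - 1 := by
    norm_num [g₁, sAux_zero, Real.sqrt_one]
  simpa [h0] using hc.tendsto

lemma g₂_tendsto (m : ℝ) : Tendsto (g₂ m) (nhds 0) (nhds (m - 1/2)) := by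
  have hc : ContinuousAt (g₂ m) 0 := by
    unfold g₂ sAux
    fun_prop (disch := norm_num [Real.sqrt_one])
  have h0 : g₂ m 0 = m - 1/2 := by
    norm_num [g₂, sAux_zero]
    ring
  simpa [h0] using hc.tendsto

lemma g₃_tendsto (m : ℝ) : Tendsto (g₃ m) (nhds 0) (nhds m) := by
  have hc : ContinuousAt (g₃ m) 0 := by
    unfold g₃ sAux
    fun_prop (disch := norm_num [Real.sqrt_one])
  have h0 : g₃ m 0 = m := by
    norm_num [g₃, sAux_zero, Real.sqrt_one]
  simpa [h0] using hc.tendsto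

lemma invBot : Tendsto (fun l : ℝ => l⁻¹) atBot (nhds (0 : ℝ)) := by
  have h1 : Tendsto (fun l : ℝ => -l) atBot atTop := tendsto_neg_atBot_atTop
  have h2 : Tendsto (fun x : ℝ => x⁻¹) atTop (nhds 0) := tendsto_inv_atTop_zero
  have h3 : Tendsto (fun l : ℝ => (-l)⁻¹) atBot (nhds 0) := h2.comp h1
  have h4 := h3.neg
  rw [neg_zero] at h4
  refine h4.congr fun l => ?_
  show -(-l)⁻¹ = l⁻¹
  rw [inv_neg, neg_neg]

set_option maxHeartbeats 1000000 in
/-- As `λ → ±∞` the common generating line of the hyperboloid `Q_λ` and the extended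
oloid tends (pointwise in `m`) to the line `{(m−1, m−1/2, m) : m ∈ ℝ}`, which is a
generating line of the hyperbolic paraboloid `x² − z² + 2y = 0` and an asymptote of
the edge of regression. -/
theorem stmt_18 (m : ℝ) :
    (Tendsto (fun l : ℝ => ωt₁ m l) atTop (nhds (m - 1)) ∧
      Tendsto (fun l : ℝ => ωt₁ m l) atBot (nhds (m - 1))) ∧
    (Tendsto (fun l : ℝ => ωt₂ m l) atTop (nhds (m - 1/2)) ∧
      Tendsto (fun l : ℝ => ωt₂ m l) atBot (nhds (m - 1/2))) ∧
    (Tendsto (fun l : ℝ => ωt₃ m l) atTop (nhds m) ∧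
      Tendsto (fun l : ℝ => ωt₃ m l) atBot (nhds m)) ∧
    (∀ m' : ℝ, (m' - 1) ^ 2 - m' ^ 2 + 2 * (m' - 1/2) = 0) := by
  have hTop : Tendsto (fun l : ℝ => l⁻¹) atTop (nhds 0) := tendsto_inv_atTop_zero
  have hBot : Tendsto (fun l : ℝ => l⁻¹) atBot (nhds 0) := invBot
  have eTop : ∀ᶠ l : ℝ in atTop, l ≠ 0 := eventually_ne_atTop 0
  have eBot : ∀ᶠ l : ℝ in atBot, l ≠ 0 := eventually_ne_atBot 0
  refine ⟨⟨?_, ?_⟩, ⟨?_, ?_⟩, ⟨?_, ?_⟩, fun m' => by ring⟩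
  · exact Tendsto.congr' (eTop.mono fun l hl => (key1 m l hl).symm) ((g₁_tendsto m).comp hTop)
  · exact Tendsto.congr' (eBot.mono fun l hl => (key1 m l hl).symm) ((g₁_tendsto m).comp hBot)
  · exact Tendsto.congr' (eTop.mono fun l hl => (key2 m l hl).symm) ((g₂_tendsto m).comp hTop)
  · exact Tendsto.congr' (eBot.mono fun l hl => (key2 m l hl).symm) ((g₂_tendsto m).comp hBot)
  · exact Tendsto.congr' (eTop.mono fun l hl => (key3 m l hl).symm) ((g₃_tendsto m).comp hTop)
  · exact Tendsto.congr' (eBot.mono fun l hl => (key3 m l hl).symm) ((g₃_tendsto m).comp hBot)
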